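/- arXiv:1602.03263 — 8 statements merged into one kernel-verified Lean document; each statement's English description precedes it below -/
import Mathlib

section
/- Let u₁, u₂ be positive integers and v₁, v₂ integers with u₁v₂ − u₂v₁ ≠ 0, and let α be a real number. If there exists a complex number c such that ((u₁n + v₁)/(u₂n + v₂))^{iα} = c for all sufficiently large positive integers n, then α = 0 and c = 1. -/
/-!
Write `r n = (u₁n+v₁)/(u₂n+v₂)`. Constancy of `r n ^ {iα}` puts `α (log r (n+1) - log r n)` in
`2πℤ` for large `n`. As `r n → u₁/u₂ > 0`, these multiples of `2π` tend to `0`, so they eventually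
vanish; but `u₁v₂ - u₂v₁ ≠ 0` makes the Möbius map `r` injective, so `log r (n+1) ≠ log r n`,
forcing `α = 0` and then `c = e⁰ = 1`.
-/

open Filter Topology Real

lemma eq_of_div_linear_eq {a b c d x y : ℝ} (hdet : a * d - c * b ≠ 0)
    (hx : c * x + d ≠ 0) (hy : c * y + d ≠ 0)
    (h : (a * x + b) / (c * x + d) = (a * y + b) / (c * y + d)) : x = y := by
  rw [div_eq_div_iff hx hy] at h
  have hcross : (a * d - c * b) * (x - y) = 0 := by linear_combination h
  exact sub_eq_zero.1 ((mul_eq_zero.1 hcross).resolve_left hdet)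

lemma tendsto_div_linear_atTop (a b c d : ℝ) (hc : 0 < c) :
    Tendsto (fun x => (a * x + b) / (c * x + d)) atTop (𝓝 (a / c)) := by
  have hden : Tendsto (fun x => c * (c * x + d)) atTop atTop :=
    (tendsto_atTop_add_const_right _ d (tendsto_id.const_mul_atTop hc)).const_mul_atTop hc
  have hrem : Tendsto (fun x => (c * b - a * d) / (c * (c * x + d))) atTop (𝓝 0) :=
    tendsto_const_nhds.div_atTop hden
  have hlim :
      Tendsto (fun x => a / c + (c * b - a * d) / (c * (c * x + d))) atTop (𝓝 (a / c)) := by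
    simpa using hrem.const_add (a / c)
  refine hlim.congr' ?_
  filter_upwards [hden.eventually_gt_atTop 0] with x hx
  have hx' : c * x + d ≠ 0 := right_ne_zero_of_mul hx.ne'
  field_simp
  ring

lemma Filter.Tendsto.sub_comp_add_one {f : ℤ → ℝ} {L : ℝ} (hf : Tendsto f atTop (𝓝 L)) :
    Tendsto (fun n => f (n + 1) - f n) atTop (𝓝 0) := by
  simpa using (hf.comp (tendsto_atTop_add_const_right _ 1 tendsto_id)).sub hf

lemma eventually_eq_zero_of_tendsto_zero_of_zmultiples {ι : Type*} {l : Filter ι}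
    {d : ι → ℝ} {p : ℝ} (hp : p ≠ 0) (hd : Tendsto d l (𝓝 0))
    (hmem : ∀ᶠ i in l, ∃ k : ℤ, d i = k * p) : ∀ᶠ i in l, d i = 0 := by
  filter_upwards [hmem, hd.eventually (eventually_abs_sub_lt 0 (abs_pos.2 hp))]
    with i ⟨k, hk⟩ hsmall
  rw [sub_zero, hk, abs_mul, mul_lt_iff_lt_one_left (abs_pos.2 hp), ← Int.cast_abs,
    ← Int.cast_one, Int.cast_lt, Int.abs_lt_one_iff] at hsmall
  simp [hk, hsmall]

lemma eq_zero_of_exp_mul_I_eventually_eq {ι : Type*} {l : Filter ι} {x y : ι → ℝ} {α : ℝ}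
    (hxy : Tendsto (fun i => x i - y i) l (𝓝 0)) (hne : ∃ᶠ i in l, x i ≠ y i)
    (hexp : ∀ᶠ i in l,
      Complex.exp (Complex.I * α * x i) = Complex.exp (Complex.I * α * y i)) :
    α = 0 := by
  have hperiod : ∀ᶠ i in l, ∃ k : ℤ, α * (x i - y i) = k * (2 * π) := by
    filter_upwards [hexp] with i hi
    have hcircle : Circle.exp (α * x i) = Circle.exp (α * y i) := Circle.ext <| by
      simpa only [Circle.coe_exp, Complex.ofReal_mul, mul_comm Complex.I, mul_assoc] using hi
    obtain ⟨k, hk⟩ := Circle.exp_eq_exp.1 hcircle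
    exact ⟨k, by rw [mul_sub, hk]; ring⟩
  have hzero := eventually_eq_zero_of_tendsto_zero_of_zmultiples two_pi_pos.ne'
    (by simpa using hxy.const_mul α) hperiod
  obtain ⟨i, hi, hxi⟩ := (hne.and_eventually hzero).exists
  exact (mul_eq_zero.1 hxi).resolve_right (sub_ne_zero.2 hi)

/-- If `((u₁n+v₁)/(u₂n+v₂))^{iα} = c` for all sufficiently large `n`, then `α = 0` and `c = 1`. -/
theorem stmt_0 (u₁ u₂ v₁ v₂ : ℤ) (hu₁ : 0 < u₁) (hu₂ : 0 < u₂)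
    (hΔ : u₁ * v₂ - u₂ * v₁ ≠ 0) (α : ℝ) (c : ℂ)
    (h : ∃ N : ℤ, ∀ n : ℤ, N ≤ n →
      0 < u₁ * n + v₁ ∧ 0 < u₂ * n + v₂ ∧
      Complex.exp (Complex.I * α *
        Real.log (((u₁ * n + v₁ : ℤ) : ℝ) / ((u₂ * n + v₂ : ℤ) : ℝ))) = c) :
    α = 0 ∧ c = 1 := by
  obtain ⟨N, hN⟩ := h
  set r : ℤ → ℝ := fun n => ((u₁ * n + v₁ : ℤ) : ℝ) / ((u₂ * n + v₂ : ℤ) : ℝ) with hr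
  have hr_pos : ∀ n, N ≤ n → 0 < r n := fun n hn =>
    div_pos (Int.cast_pos.2 (hN n hn).1) (Int.cast_pos.2 (hN n hn).2.1)
  have hr_lim : Tendsto r atTop (𝓝 ((u₁ : ℝ) / u₂)) := by
    refine ((tendsto_div_linear_atTop (u₁ : ℝ) v₁ u₂ v₂ (Int.cast_pos.2 hu₂)).comp
      tendsto_intCast_atTop_atTop).congr fun n => ?_
    simp [hr]
  have hlog_lim : Tendsto (fun n => Real.log (r n)) atTop (𝓝 (Real.log ((u₁ : ℝ) / u₂))) :=
    (continuousAt_log (by positivity)).tendsto.comp hr_lim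
  have hr_succ_ne : ∀ n, N ≤ n → Real.log (r (n + 1)) ≠ Real.log (r n) := by
    intro n hn hlog
    have hden : ∀ m, N ≤ m → (u₂ : ℝ) * m + v₂ ≠ 0 := fun m hm => by
      exact_mod_cast (hN m hm).2.1.ne'
    have hΔ' : (u₁ : ℝ) * v₂ - u₂ * v₁ ≠ 0 := by exact_mod_cast hΔ
    have hr_eq := log_injOn_pos (hr_pos _ (by omega)) (hr_pos n hn) hlog
    simp only [hr, Int.cast_add, Int.cast_mul, Int.cast_one] at hr_eq
    have hsucc := eq_of_div_linear_eq hΔ' (by exact_mod_cast hden _ (by omega : N ≤ n + 1))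
      (hden n hn) hr_eq
    linarith
  have hexp_eq : ∀ᶠ n in atTop, Complex.exp (Complex.I * α * Real.log (r (n + 1))) =
      Complex.exp (Complex.I * α * Real.log (r n)) := by
    filter_upwards [eventually_ge_atTop N] with n hn
    exact (hN (n + 1) (by omega)).2.2.trans (hN n hn).2.2.symm
  have hα : α = 0 := eq_zero_of_exp_mul_I_eventually_eq hlog_lim.sub_comp_add_one
    ((eventually_ge_atTop N).mono hr_succ_ne).frequently hexp_eq
  refine ⟨hα, ?_⟩
  simpa [hα] using (hN N le_rfl).2.2.symm
end

section
/- Let a₁, a₂ be positive integers and b₁, b₂ integers with Δ₀ = a₁b₂ − a₂b₁ ≠ 0. Let p be a prime not dividing gcd(a₁,a₂)·Δ₀, let m ≥ 1, and suppose χ is a Dirichlet character mod p^m of order t. If there is a nonzero complex constant c such that χ((a₁n + b₁)·(a₂n + b₂)⁻¹) = c for every residue class n mod p^m with both a₁n + b₁ and a₂n + b₂ coprime to p (the inverse taken in the units mod p^m), then p^m − 2p^{m−1} ≤ t⁻¹·p^{m−1}(p−1); in particular, if p > 3 then t = 1, and if p = 3 then t ≤ 2. -/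
/-!
`ZMod (p ^ m)` is a local ring and `Δ = a₁b₂ - a₂b₁` is a unit in it, so each linear form
`aᵢn + bᵢ` has a unit coefficient and fails to be a unit for at most `p^(m-1)` residues `n`.
Hence at least `p^m - 2p^(m-1)` residues are admissible. Because `Δ` is a unit, the map
`n ↦ (a₁n + b₁)(a₂n + b₂)⁻¹` is injective on them, so they inject into the fibre of `χ` over `c`,
a coset of `ker χ` in `(ZMod (p^m))ˣ`, which has `φ(p^m) / t` elements.
-/

open Finset

theorem Finset.card_le_card_filter_and_add_card_filter_not_add {α : Type*} (s : Finset α)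
    (P Q : α → Prop) [DecidablePred P] [DecidablePred Q] :
    #s ≤ #{x ∈ s | P x ∧ Q x} + #{x ∈ s | ¬P x} + #{x ∈ s | ¬Q x} := by
  classical
  calc #s ≤ #({x ∈ s | P x ∧ Q x} ∪ {x ∈ s | ¬P x} ∪ {x ∈ s | ¬Q x}) :=
        card_le_card fun x hx => by simp only [mem_union, mem_filter]; tauto
    _ ≤ _ := (card_union_le _ _).trans (Nat.add_le_add_right (card_union_le _ _) _)

theorem card_filter_isUnit (R : Type*) [Monoid R] [Fintype R] [DecidableEq R] :
    #{x : R | IsUnit x} = Fintype.card Rˣ := by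
  rw [← card_univ, ← card_map ⟨((↑) : Rˣ → R), Units.val_injective⟩]
  congr 1
  ext x
  simp only [mem_filter, mem_univ, true_and, mem_map, Function.Embedding.coeFn_mk]
  exact Iff.rfl

namespace IsLocalRing

variable {R : Type*} [CommRing R] [IsLocalRing R]

theorem isUnit_or_isUnit_of_isUnit_mul_sub_mul {a₁ b₁ a₂ b₂ : R}
    (h : IsUnit (a₁ * b₂ - a₂ * b₁)) : (IsUnit a₁ ∨ IsUnit b₁) ∧ (IsUnit a₂ ∨ IsUnit b₂) := by
  simp only [← notMem_maximalIdeal] at h ⊢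
  constructor <;> contrapose! h
  · exact Ideal.sub_mem _ (Ideal.mul_mem_right _ _ h.1) (Ideal.mul_mem_left _ _ h.2)
  · exact Ideal.sub_mem _ (Ideal.mul_mem_left _ _ h.2) (Ideal.mul_mem_right _ _ h.1)

theorem card_filter_not_isUnit_mul_add_le [Fintype R] [DecidableEq R] {a b : R}
    (hab : IsUnit a ∨ IsUnit b) : #{n | ¬IsUnit (a * n + b)} ≤ #{x : R | ¬IsUnit x} := by
  by_cases ha : IsUnit a
  · refine card_le_card_of_injOn (fun n => a * n + b) (fun n hn => by simpa using hn) ?_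
    intro n _ n' _ h
    exact ha.mul_left_cancel (add_right_cancel h)
  · suffices h : ∀ n, IsUnit (a * n + b) by simp [h]
    intro n
    have hb := hab.resolve_left ha
    rw [← notMem_maximalIdeal] at hb ⊢
    contrapose! hb
    simpa using Ideal.sub_mem _ hb (Ideal.mul_mem_right n _ ((mem_maximalIdeal a).mpr ha))

end IsLocalRing

namespace ZMod

theorem isLocalRing_prime_pow {p m : ℕ} [Fact p.Prime] (hm : m ≠ 0) :
    IsLocalRing (ZMod (p ^ m)) :=
  have : Fact (1 < p ^ m) := ⟨Nat.one_lt_pow hm (Fact.out : p.Prime).one_lt⟩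
  IsLocalRing.of_surjective' (PadicInt.toZModPow m) fun y => by
    obtain ⟨k, rfl⟩ := intCast_surjective y
    exact ⟨k, map_intCast _ k⟩

theorem isUnit_intCast_prime_pow_iff {p m : ℕ} (hp : p.Prime) (hm : m ≠ 0) (k : ℤ) :
    IsUnit (k : ZMod (p ^ m)) ↔ ¬(p : ℤ) ∣ k := by
  rw [coe_int_isUnit_iff_isCoprime, Nat.cast_pow, IsCoprime.pow_left_iff (Nat.pos_of_ne_zero hm),
    (Nat.prime_iff_prime_int.mp hp).coprime_iff_not_dvd]

theorem card_filter_not_isUnit_prime_pow {p m : ℕ} [hp : Fact p.Prime] (hm : m ≠ 0) :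
    #{x : ZMod (p ^ m) | ¬IsUnit x} = p ^ (m - 1) := by
  have hp := hp.out
  have h := card_filter_add_card_filter_not (s := (univ : Finset (ZMod (p ^ m)))) IsUnit
  rw [card_filter_isUnit, card_units_eq_totient, Nat.totient_prime_pow hp (Nat.pos_of_ne_zero hm),
    card_univ, card, Nat.mul_sub_one, pow_sub_one_mul hm] at h
  have : p ^ (m - 1) ≤ p ^ m := Nat.pow_le_pow_right hp.pos (Nat.sub_le m 1)
  omega

theorem injOn_mul_add_mul_inv_mul_add {N : ℕ} {a₁ b₁ a₂ b₂ : ZMod N}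
    (hΔ : IsUnit (a₁ * b₂ - a₂ * b₁)) :
    Set.InjOn (fun n => (a₁ * n + b₁) * (a₂ * n + b₂)⁻¹) {n | IsUnit (a₂ * n + b₂)} := by
  intro n hn n' hn' h
  have hcross : (a₁ * b₂ - a₂ * b₁) * (n - n') = 0 := by
    have h₁ := mul_inv_of_unit _ hn
    have h₂ := mul_inv_of_unit _ hn'
    linear_combination (a₂ * n + b₂) * (a₂ * n' + b₂) * h - (a₁ * n + b₁) * (a₂ * n' + b₂) * h₁ +
      (a₁ * n' + b₁) * (a₂ * n + b₂) * h₂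
  exact sub_eq_zero.mp (hΔ.mul_right_eq_zero.mp hcross)

end ZMod

theorem MonoidHom.orderOf_dvd_card_range {G H : Type*} [Group G] [CommGroup H] (f : G →* H)
    [Finite f.range] : orderOf f ∣ Nat.card f.range := by
  refine orderOf_dvd_of_pow_eq_one (MonoidHom.ext fun g => ?_)
  simpa using congrArg Subtype.val (pow_card_eq_one' (x := (⟨f g, g, rfl⟩ : f.range)))

theorem MonoidHom.card_fiber_mul_orderOf_le {G H : Type*} [Group G] [Fintype G] [CommGroup H]
    [DecidableEq H] (f : G →* H) (y : H) : #{g | f g = y} * orderOf f ≤ Fintype.card G := by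
  rcases em (y ∈ Set.range f) with hy | hy
  · have hker : #{g | f g = y} = Nat.card f.ker := by
      rw [card_fiber_eq_of_mem_range f hy ⟨1, map_one f⟩, Nat.card_eq_fintype_card,
        ← Fintype.card_subtype]
      exact Fintype.card_congr (Equiv.subtypeEquivRight fun g => f.mem_ker.symm)
    rw [hker, ← Nat.card_eq_fintype_card, ← f.ker.card_mul_index, Subgroup.index_ker]
    exact Nat.mul_le_mul_left _ (Nat.le_of_dvd Nat.card_pos f.orderOf_dvd_card_range)
  · have : ∀ g, f g ≠ y := fun g h => hy ⟨g, h⟩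
    simp [this]

theorem MulChar.card_fiber_mul_orderOf_le {R R' : Type*} [CommMonoid R] [Fintype R]
    [DecidableEq R] [CommMonoidWithZero R'] [DecidableEq R'] (χ : MulChar R R') {c : R'}
    (hc : c ≠ 0) : #{x | χ x = c} * orderOf χ ≤ Fintype.card Rˣ := by
  have isUnit_of_apply_eq {x : R} (hx : χ x = c) : IsUnit x :=
    not_not.mp fun h => hc (hx ▸ χ.map_nonunit h)
  rcases em (∃ x, χ x = c) with ⟨x₀, hx₀⟩ | hne
  · set ψ := mulEquivToUnitHom χ
    have hfiber : #{x | χ x = c} = #{u | ψ u = ψ (isUnit_of_apply_eq hx₀).unit} := by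
      rw [← card_map ⟨((↑) : Rˣ → R), Units.val_injective⟩]
      congr 1
      ext x
      simp only [ψ, mem_filter, mem_univ, true_and, mem_map, Function.Embedding.coeFn_mk,
        Units.ext_iff, mulEquivToUnitHom_apply, coe_equivToUnitHom, IsUnit.unit_spec]
      refine ⟨fun hx => ?_, fun ⟨u, hu, hux⟩ => hux ▸ hu.trans hx₀⟩
      have hxu := isUnit_of_apply_eq hx
      exact ⟨hxu.unit, by rw [hxu.unit_spec, hx, hx₀], hxu.unit_spec⟩
    rw [hfiber, ← MulEquiv.orderOf_eq mulEquivToUnitHom χ]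
    exact ψ.card_fiber_mul_orderOf_le _
  · push Not at hne
    simp [hne]

theorem order_bounds_of_count {p q A t : ℕ} (hp : 2 ≤ p) (hq : 0 < q) (ht : 0 < t)
    (hA : q * p ≤ A + 2 * q) (hAt : A * t ≤ q * (p - 1)) :
    ((q : ℝ) * p - 2 * q ≤ (t : ℝ)⁻¹ * q * (p - 1)) ∧ (3 < p → t = 1) ∧ (p = 3 → t ≤ 2) := by
  have key : p * t + 1 ≤ p + 2 * t := by
    refine Nat.le_of_mul_le_mul_left ?_ hq
    zify [show 1 ≤ p by omega] at hAt ⊢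
    nlinarith
  refine ⟨?_, fun hp3 => ?_, fun hp3 => ?_⟩
  · rw [mul_assoc, le_inv_mul_iff₀ (by exact_mod_cast ht)]
    have : ((p * t + 1 : ℕ) : ℝ) ≤ ((p + 2 * t : ℕ) : ℝ) := by exact_mod_cast key
    push_cast at this
    have hq' : (0 : ℝ) < q := by exact_mod_cast hq
    nlinarith
  · nlinarith
  · subst hp3; omega

theorem stmt_3_general (a₁ a₂ b₁ b₂ : ℤ) (p : ℕ) (hp : p.Prime) (m : ℕ) (hm : 1 ≤ m)
    (hpnd : ¬ (p : ℤ) ∣ Int.gcd a₁ a₂ * (a₁ * b₂ - a₂ * b₁))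
    (χ : DirichletCharacter ℂ (p ^ m)) (t : ℕ) (ht : t = orderOf χ)
    (c : ℂ) (hc : c ≠ 0)
    (hval : ∀ n : ZMod (p ^ m),
      IsUnit ((a₁ : ZMod (p ^ m)) * n + (b₁ : ZMod (p ^ m))) →
      IsUnit ((a₂ : ZMod (p ^ m)) * n + (b₂ : ZMod (p ^ m))) →
      χ (((a₁ : ZMod (p ^ m)) * n + (b₁ : ZMod (p ^ m))) *
        ((a₂ : ZMod (p ^ m)) * n + (b₂ : ZMod (p ^ m)))⁻¹) = c) :
    ((p : ℝ) ^ m - 2 * (p : ℝ) ^ (m - 1) ≤ (t : ℝ)⁻¹ * (p : ℝ) ^ (m - 1) * ((p : ℝ) - 1)) ∧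
      (3 < p → t = 1) ∧ (p = 3 → t ≤ 2) := by
  classical
  have : Fact p.Prime := ⟨hp⟩
  have hm₀ : m ≠ 0 := by omega
  have := ZMod.isLocalRing_prime_pow (p := p) hm₀
  have hΔ : IsUnit ((a₁ : ZMod (p ^ m)) * b₂ - a₂ * b₁) := by
    exact_mod_cast (ZMod.isUnit_intCast_prime_pow_iff hp hm₀ _).mpr fun h => hpnd (h.mul_left _)
  obtain ⟨h₁, h₂⟩ := IsLocalRing.isUnit_or_isUnit_of_isUnit_mul_sub_mul hΔ
  set A := #{n : ZMod (p ^ m) | IsUnit ((a₁ : ZMod (p ^ m)) * n + b₁) ∧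
    IsUnit ((a₂ : ZMod (p ^ m)) * n + b₂)}
  have hcover : p ^ m ≤ A + 2 * p ^ (m - 1) := by
    have := card_le_card_filter_and_add_card_filter_not_add univ
      (fun n : ZMod (p ^ m) => IsUnit ((a₁ : ZMod (p ^ m)) * n + b₁))
      (fun n => IsUnit ((a₂ : ZMod (p ^ m)) * n + b₂))
    have hbad₁ := IsLocalRing.card_filter_not_isUnit_mul_add_le h₁
    have hbad₂ := IsLocalRing.card_filter_not_isUnit_mul_add_le h₂
    rw [ZMod.card_filter_not_isUnit_prime_pow hm₀] at hbad₁ hbad₂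
    rw [card_univ, ZMod.card] at this
    omega
  have hratio : A ≤ #{x | χ x = c} := by
    refine card_le_card_of_injOn _ (fun n hn => ?_)
      ((ZMod.injOn_mul_add_mul_inv_mul_add hΔ).mono fun n hn => ((mem_filter_univ n).mp hn).2)
    obtain ⟨hu₁, hu₂⟩ := (mem_filter_univ n).mp hn
    exact (mem_filter_univ _).mpr (hval n hu₁ hu₂)
  have hfiber := χ.card_fiber_mul_orderOf_le hc
  rw [ZMod.card_units_eq_totient, Nat.totient_prime_pow hp hm, ← ht] at hfiber
  rw [← pow_sub_one_mul hm₀] at hcover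
  have := order_bounds_of_count hp.two_le (pow_pos hp.pos _) (ht ▸ χ.orderOf_pos) hcover
    ((Nat.mul_le_mul_right t hratio).trans hfiber)
  push_cast at this
  rwa [pow_sub_one_mul hm₀] at this

/-- If a Dirichlet character mod `p^m` of order `t` is constantly `c ≠ 0` on the ratios
`(a₁n+b₁)/(a₂n+b₂)` over admissible residues `n`, then `p^m - 2p^{m-1} ≤ t⁻¹ p^{m-1}(p-1)`;
in particular `t = 1` if `p > 3` and `t ≤ 2` if `p = 3`. -/
theorem stmt_3 (a₁ a₂ b₁ b₂ : ℤ) (ha₁ : 0 < a₁) (ha₂ : 0 < a₂)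
    (hΔ : a₁ * b₂ - a₂ * b₁ ≠ 0) (p : ℕ) (hp : p.Prime) (m : ℕ) (hm : 1 ≤ m)
    (hpnd : ¬ (p : ℤ) ∣ Int.gcd a₁ a₂ * (a₁ * b₂ - a₂ * b₁))
    (χ : DirichletCharacter ℂ (p ^ m)) (t : ℕ) (ht : t = orderOf χ)
    (c : ℂ) (hc : c ≠ 0)
    (hval : ∀ n : ZMod (p ^ m),
      IsUnit ((a₁ : ZMod (p ^ m)) * n + (b₁ : ZMod (p ^ m))) →
      IsUnit ((a₂ : ZMod (p ^ m)) * n + (b₂ : ZMod (p ^ m))) →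
      χ (((a₁ : ZMod (p ^ m)) * n + (b₁ : ZMod (p ^ m))) *
        ((a₂ : ZMod (p ^ m)) * n + (b₂ : ZMod (p ^ m)))⁻¹) = c) :
    ((p : ℝ) ^ m - 2 * (p : ℝ) ^ (m - 1) ≤ (t : ℝ)⁻¹ * (p : ℝ) ^ (m - 1) * ((p : ℝ) - 1)) ∧
      (3 < p → t = 1) ∧ (p = 3 → t ≤ 2) :=
  stmt_3_general a₁ a₂ b₁ b₂ p hp m hm hpnd χ t ht c hc hval
end

section
/- Let a₁, a₂ be positive integers and b₁, b₂ integers with a₁b₂ − a₂b₁ ≠ 0, and let p be a prime not dividing gcd(a₁,a₂)·(a₁b₂ − a₂b₁). Then for every integer w with w and a₁ − w·a₂ both coprime to p^m, there exists an integer n such that a₁n + b₁ and a₂n + b₂ are both coprime to p and (a₁n + b₁) ≡ w·(a₂n + b₂) (mod p^m). -/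
/-- Surjectivity of the fractional linear map onto admissible residues `w` mod `p^m`. -/
theorem stmt_4 (a₁ a₂ b₁ b₂ : ℤ) (ha₁ : 0 < a₁) (ha₂ : 0 < a₂)
    (hΔ : a₁ * b₂ - a₂ * b₁ ≠ 0) (p : ℕ) (hp : p.Prime) (m : ℕ) (hm : 1 ≤ m)
    (hpnd : ¬ (p : ℤ) ∣ Int.gcd a₁ a₂ * (a₁ * b₂ - a₂ * b₁)) :
    ∀ w : ℤ, IsCoprime w ((p : ℤ) ^ m) → IsCoprime (a₁ - w * a₂) ((p : ℤ) ^ m) →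
      ∃ n : ℤ, IsCoprime (a₁ * n + b₁) (p : ℤ) ∧ IsCoprime (a₂ * n + b₂) (p : ℤ) ∧
        a₁ * n + b₁ ≡ w * (a₂ * n + b₂) [ZMOD (p : ℤ) ^ m] := by
  intro w hw hcop
  have hpZ : Prime (p : ℤ) := Nat.prime_iff_prime_int.mp hp
  have hppm : (p : ℤ) ∣ (p : ℤ) ^ m := dvd_pow_self _ (by omega)
  obtain ⟨u, v, huv⟩ := hcop
  set n : ℤ := u * (w * b₂ - b₁) with hn
  have hmod : a₁ * n + b₁ ≡ w * (a₂ * n + b₂) [ZMOD (p : ℤ) ^ m] := by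
    have : (p : ℤ) ^ m ∣ w * (a₂ * n + b₂) - (a₁ * n + b₁) :=
      ⟨v * (w * b₂ - b₁), by rw [hn]; linear_combination (b₁ - w * b₂) * huv⟩
    exact (Int.modEq_iff_dvd.mpr this)
  have hdiff : (p : ℤ) ∣ w * (a₂ * n + b₂) - (a₁ * n + b₁) :=
    hppm.trans (Int.modEq_iff_dvd.mp hmod)
  have hpΔ : ¬ (p : ℤ) ∣ (a₁ * b₂ - a₂ * b₁) := fun h => hpnd (h.mul_left _)
  have hpw : ¬ (p : ℤ) ∣ w := fun h =>
    hpZ.not_unit ((hw.of_isCoprime_of_dvd_right hppm).isUnit_of_dvd' h dvd_rfl)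
  have key : ¬ (p : ℤ) ∣ (a₂ * n + b₂) := by
    intro h
    have h2 : (p : ℤ) ∣ w * (a₂ * n + b₂) := h.mul_left w
    have h1 : (p : ℤ) ∣ (a₁ * n + b₁) := by
      have := dvd_sub h2 hdiff
      have e : w * (a₂ * n + b₂) - (w * (a₂ * n + b₂) - (a₁ * n + b₁)) = a₁ * n + b₁ := by
        ring
      rwa [e] at this
    have hd : (p : ℤ) ∣ a₁ * (a₂ * n + b₂) - a₂ * (a₁ * n + b₁) :=
      dvd_sub (h.mul_left a₁) (h1.mul_left a₂)
    have e : a₁ * (a₂ * n + b₂) - a₂ * (a₁ * n + b₁) = a₁ * b₂ - a₂ * b₁ := by ring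
    rw [e] at hd
    exact hpΔ hd
  have key1 : ¬ (p : ℤ) ∣ (a₁ * n + b₁) := by
    intro h
    have h2 : (p : ℤ) ∣ w * (a₂ * n + b₂) := by
      have := dvd_add h hdiff
      have e : a₁ * n + b₁ + (w * (a₂ * n + b₂) - (a₁ * n + b₁)) = w * (a₂ * n + b₂) := by
        ring
      rwa [e] at this
    exact key ((hpZ.dvd_mul.mp h2).resolve_left hpw)
  exact ⟨n, (hpZ.coprime_iff_not_dvd.mpr key1).symm,
    (hpZ.coprime_iff_not_dvd.mpr key).symm, hmod⟩
end

section
/- Let p be a prime, t > s ≥ 1 integers, and let m₂, D₁, w₂ be integers with m₂, w₂, D₁ all coprime to p. For 1 ≤ k ≤ p^{t−s}, define j_k to be the residue class mod p^{t−s} of (w₂(m₂p^s D₁ k + w₂))⁻¹ · m₂ D₁ k, the inverse taken in the units mod p^{t−s}. Then the map k ↦ j_k is a bijection from residues mod p^{t−s} to residues mod p^{t−s}. -/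
/-!
Modulo `p ^ (t - s)` the number `p` is nilpotent, so for `s ≥ 1` every denominator
`w₂ (m₂ p^s D₁ k + w₂)` is a unit plus a nilpotent, hence a unit. Cross-multiplying two equal values `j_k₁ = j_k₂` of this
fractional linear map, the terms in `k₁ k₂` cancel and leave `w₂² m₂ D₁ k₁ = w₂² m₂ D₁ k₂`,
so the map is injective, hence bijective on the finite ring `ZMod (p ^ (t - s))`.
-/

namespace ZMod

theorem inv_mul_eq_inv_mul_iff {n : ℕ} {u₁ u₂ y₁ y₂ : ZMod n} (h₁ : IsUnit u₁)
    (h₂ : IsUnit u₂) : u₁⁻¹ * y₁ = u₂⁻¹ * y₂ ↔ u₂ * y₁ = u₁ * y₂ := by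
  have hu₁ := mul_inv_of_unit u₁ h₁
  have hu₂ := mul_inv_of_unit u₂ h₂
  constructor
  · intro h
    linear_combination (u₁ * u₂) * h - (u₂ * y₁) * hu₁ + (u₁ * y₂) * hu₂
  · intro h
    linear_combination (u₁⁻¹ * u₂⁻¹) * h + (u₂⁻¹ * y₂) * hu₁ - (u₁⁻¹ * y₁) * hu₂

theorem injective_inv_mul_add_mul {n : ℕ} {b c d : ZMod n} (hb : IsUnit b) (hc : IsNilpotent c)
    (hd : IsUnit d) : Function.Injective fun k ↦ (c * k + d)⁻¹ * (b * k) := by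
  have hden (k : ZMod n) : IsUnit (c * k + d) :=
    ((Commute.all _ _).isNilpotent_mul_right hc).isUnit_add_right_of_commute hd (Commute.all _ _)
  intro k₁ k₂ h
  have hcross := (inv_mul_eq_inv_mul_iff (hden k₁) (hden k₂)).mp h
  exact (hd.mul hb).mul_left_cancel (by linear_combination hcross)

theorem isNilpotent_natCast_pow (p e : ℕ) : IsNilpotent (p : ZMod (p ^ e)) :=
  ⟨e, by rw [← Nat.cast_pow, natCast_self]⟩

theorem isUnit_intCast_of_isCoprime_pow {p : ℕ} {x : ℤ} (hx : IsCoprime x p) (e : ℕ) :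
    IsUnit (x : ZMod (p ^ e)) := by
  rw [coe_int_isUnit_iff_isCoprime, Nat.cast_pow]
  exact hx.pow_right.symm

end ZMod

open ZMod in
theorem stmt_7_general (p : ℕ) (hp : p.Prime) (s t : ℕ) (hs : 1 ≤ s)
    (m₂ D₁ w₂ : ℤ) (hm₂ : IsCoprime m₂ (p : ℤ)) (hw₂ : IsCoprime w₂ (p : ℤ))
    (hD₁ : IsCoprime D₁ (p : ℤ)) :
    Function.Bijective (fun k : ZMod (p ^ (t - s)) =>
      ((w₂ : ZMod (p ^ (t - s))) *
          ((m₂ : ZMod (p ^ (t - s))) * (p : ZMod (p ^ (t - s))) ^ s *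
            (D₁ : ZMod (p ^ (t - s))) * k + (w₂ : ZMod (p ^ (t - s)))))⁻¹ *
        ((m₂ : ZMod (p ^ (t - s))) * (D₁ : ZMod (p ^ (t - s))) * k)) := by
  have : NeZero (p ^ (t - s)) := ⟨pow_ne_zero _ hp.ne_zero⟩
  have hunit (x : ℤ) (hx : IsCoprime x p) := isUnit_intCast_of_isCoprime_pow hx (t - s)
  have hnil : IsNilpotent ((w₂ : ZMod (p ^ (t - s))) * m₂ * p ^ s * D₁) := by
    rw [mul_right_comm, mul_comm]
    exact (Commute.all _ _).isNilpotent_mul_right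
      ((isNilpotent_natCast_pow p (t - s)).pow_of_pos (by omega))
  have hinj := injective_inv_mul_add_mul ((hunit m₂ hm₂).mul (hunit D₁ hD₁)) hnil
    ((hunit w₂ hw₂).mul (hunit w₂ hw₂))
  refine Finite.injective_iff_bijective.mp ?_
  convert hinj using 4 with k
  ring

/-- The map `k ↦ (w₂(m₂ p^s D₁ k + w₂))⁻¹ · m₂ D₁ k` is a bijection on residues mod `p^{t-s}`. -/
theorem stmt_7 (p : ℕ) (hp : p.Prime) (s t : ℕ) (hs : 1 ≤ s) (hst : s < t)
    (m₂ D₁ w₂ : ℤ) (hm₂ : IsCoprime m₂ (p : ℤ)) (hw₂ : IsCoprime w₂ (p : ℤ))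
    (hD₁ : IsCoprime D₁ (p : ℤ)) :
    Function.Bijective (fun k : ZMod (p ^ (t - s)) =>
      ((w₂ : ZMod (p ^ (t - s))) *
          ((m₂ : ZMod (p ^ (t - s))) * (p : ZMod (p ^ (t - s))) ^ s *
            (D₁ : ZMod (p ^ (t - s))) * k + (w₂ : ZMod (p ^ (t - s)))))⁻¹ *
        ((m₂ : ZMod (p ^ (t - s))) * (D₁ : ZMod (p ^ (t - s))) * k)) :=
  stmt_7_general p hp s t hs m₂ D₁ w₂ hm₂ hw₂ hD₁
end

section
/- Let q be a prime and let g be a completely multiplicative complex-valued function with |g(q)| ≤ 1. Define w = 1 + q^{−e}·2·Re((g(q) − 1)/(q − g(q))) for a fixed positive integer e. If |w| = 1 and w is real (hence w = ±1), then g(q) = 1. -/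
/-!
Put `u = (q - 1)/(q - g(q))`, so that `(g(q) - 1)/(q - g(q)) = u - 1`. Since `|q - g(q)| ≥ q - 1`
and `Re(q - g(q)) ≥ q - 1 > 0`, the number `u` lies in the unit disc and has positive real part.
Hence `w = 1 + 2 q^{-e} (Re u - 1)` lies in `(-1, 1]`, so `|w| = 1` forces `w = 1`, i.e. `Re u = 1`,
and a point of the closed unit disc with real part `1` is `1` itself, giving `g(q) = 1`.
-/

namespace Complex

lemma eq_one_of_norm_le_one_of_re_eq_one {u : ℂ} (hu : ‖u‖ ≤ 1) (hre : u.re = 1) : u = 1 := by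
  have him : u.im = 0 :=
    abs_re_eq_norm.mp (le_antisymm (abs_re_le_norm u) (by rw [hre, abs_one]; exact hu))
  exact ext (by simpa using hre) (by simpa using him)

variable {r : ℝ} {z : ℂ}

lemma sub_ne_zero_of_norm_le_one (hz : ‖z‖ ≤ 1) (hr : 1 < r) : (r : ℂ) - z ≠ 0 := by
  intro h
  have : ‖(r : ℂ)‖ ≤ 1 := by rwa [sub_eq_zero.mp h]
  rw [norm_real, Real.norm_of_nonneg (by linarith)] at this
  linarith

lemma norm_div_sub_le_one (hz : ‖z‖ ≤ 1) (hr : 1 ≤ r) : ‖((r - 1 : ℝ) : ℂ) / (r - z)‖ ≤ 1 := by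
  rw [norm_div, norm_real, Real.norm_of_nonneg (by linarith)]
  refine div_le_one_of_le₀ ?_ (norm_nonneg _)
  calc r - 1 ≤ ‖(r : ℂ)‖ - ‖z‖ := by rw [norm_real, Real.norm_of_nonneg (by linarith)]; linarith
    _ ≤ ‖(r : ℂ) - z‖ := norm_sub_norm_le _ _

lemma re_div_sub_pos (hz : ‖z‖ ≤ 1) (hr : 1 < r) : 0 < (((r - 1 : ℝ) : ℂ) / (r - z)).re := by
  have hre : 0 < ((r : ℂ) - z).re := by
    have := re_le_norm z
    simp only [sub_re, ofReal_re]
    linarith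
  rw [div_eq_mul_inv, re_ofReal_mul, inv_re]
  exact mul_pos (by linarith) (div_pos hre (normSq_pos.mpr (sub_ne_zero_of_norm_le_one hz hr)))

lemma eq_one_of_re_div_sub_eq_one (hz : ‖z‖ ≤ 1) (hr : 1 < r)
    (h : (((r - 1 : ℝ) : ℂ) / (r - z)).re = 1) : z = 1 := by
  have hu := eq_one_of_norm_le_one_of_re_eq_one (norm_div_sub_le_one hz hr.le) h
  rw [div_eq_one_iff_eq (sub_ne_zero_of_norm_le_one hz hr)] at hu
  push_cast at hu
  linear_combination hu

lemma sub_one_div_sub_eq (hz : ‖z‖ ≤ 1) (hr : 1 < r) :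
    (z - 1) / (r - z) = ((r - 1 : ℝ) : ℂ) / (r - z) - 1 := by
  have := sub_ne_zero_of_norm_le_one hz hr
  field_simp
  push_cast
  ring

end Complex

lemma eq_zero_of_abs_one_add_two_mul_eq_one {c s : ℝ} (hc : 0 < c) (hc1 : c ≤ 1) (hs : -1 < s)
    (h : |1 + c * 2 * s| = 1) : s = 0 := by
  rcases abs_eq zero_le_one |>.mp h with h | h
  · simpa [hc.ne'] using h
  · nlinarith

theorem stmt_10_general (q : ℕ) (hq : q.Prime) (e : ℕ) (g : ℕ → ℂ)
    (hg : ‖g q‖ ≤ 1)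
    (w : ℝ) (hw : w = 1 + ((q : ℝ) ^ e)⁻¹ * 2 * (((g q - 1) / ((q : ℂ) - g q)).re))
    (hw1 : |w| = 1) : g q = 1 := by
  have hr : (1 : ℝ) < q := by exact_mod_cast hq.one_lt
  set u := (((q - 1 : ℝ) : ℂ) / ((q : ℝ) - g q))
  have hsplit : (((g q - 1) / ((q : ℂ) - g q)).re) = u.re - 1 := by
    rw [← Complex.ofReal_natCast, Complex.sub_one_div_sub_eq hg hr, Complex.sub_re,
      Complex.one_re]
  rw [hw, hsplit] at hw1
  have hpow : 1 ≤ (q : ℝ) ^ e := one_le_pow₀ hr.le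
  have hre : u.re - 1 = 0 :=
    eq_zero_of_abs_one_add_two_mul_eq_one (by positivity) (inv_le_one_of_one_le₀ hpow)
      (by linarith [Complex.re_div_sub_pos hg hr]) hw1
  exact Complex.eq_one_of_re_div_sub_eq_one hg hr (by linarith)

/-- If `w = 1 + q^{-e}·2·Re((z-1)/(q-z))` has `|w| = 1` (with `z = g(q)`, `|z| ≤ 1`),
then `z = 1`. -/
theorem stmt_10 (q : ℕ) (hq : q.Prime) (e : ℕ) (he : 1 ≤ e) (g : ℕ → ℂ)
    (hgmul : ∀ m n : ℕ, g (m * n) = g m * g n) (hg : ‖g q‖ ≤ 1)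
    (w : ℝ) (hw : w = 1 + ((q : ℝ) ^ e)⁻¹ * 2 * (((g q - 1) / ((q : ℂ) - g q)).re))
    (hw1 : |w| = 1) : g q = 1 :=
  stmt_10_general q hq e g hg w hw hw1
end

section
/- Suppose g is a completely multiplicative function with values in the complex unit circle such that g((3n+1)/(5n+2)) = 1 for all sufficiently large positive integers n (interpreting g on positive rationals by g(r/s) = g(r)·g(s)⁻¹), and suppose on primes p coprime to 30, g(p) = χ(p) for a Dirichlet character χ mod 27 of order at most 2. If χ is the quadratic character mod 27 (nonprincipal real), then evaluating the hypothesis at n ≡ 4 (mod 540) forces g(2) = −1, while evaluating at n ≡ 9 (mod 9720) forces g(2)² · (−1) = 1, i.e. g(2)² = −1, a contradiction; hence χ must be principal. -/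
/-- If a completely multiplicative unimodular `g` satisfies `g((3n+1)/(5n+2)) = 1` for all
large `n` and agrees on primes `p ∤ 30` with a Dirichlet character `χ` mod `27` of order at
most `2`, then `χ` is principal. -/
theorem stmt_15 (g : ℕ → ℂ) (hg1 : g 1 = 1)
    (hgmul : ∀ m n : ℕ, g (m * n) = g m * g n)
    (hgnorm : ∀ n : ℕ, 0 < n → ‖g n‖ = 1)
    (hrat : ∃ N : ℕ, ∀ n : ℕ, N ≤ n → g (3 * n + 1) = g (5 * n + 2))
    (χ : DirichletCharacter ℂ 27) (hord : χ ^ 2 = 1)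
    (hgχ : ∀ p : ℕ, p.Prime → ¬ p ∣ 30 → g p = χ (p : ZMod 27)) :
    χ = 1 := by
  obtain ⟨N, hN⟩ := hrat
  -- g agrees with χ on all naturals coprime to 30
  have key : ∀ m : ℕ, Nat.Coprime m 30 → g m = χ ((m : ZMod 27)) := by
    intro m
    induction m using Nat.strong_induction_on with
    | _ m ih =>
      intro hm
      rcases eq_or_ne m 1 with rfl | h1
      · simpa using hg1
      have h0 : m ≠ 0 := by rintro rfl; exact absurd hm (by decide)
      have hp := Nat.minFac_prime h1
      have hpd : m.minFac ∣ m := Nat.minFac_dvd m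
      have hp30 : ¬ m.minFac ∣ 30 := by
        intro h
        exact hp.ne_one (Nat.dvd_one.mp (hm.gcd_eq_one ▸ Nat.dvd_gcd hpd h))
      obtain ⟨q, hq⟩ := hpd
      have hq0 : q ≠ 0 := by rintro rfl; simp at hq; exact h0 hq
      have hqlt : q < m := by
        calc q < 2 * q := by omega
        _ ≤ m.minFac * q := Nat.mul_le_mul_right q hp.two_le
        _ = m := hq.symm
      have hqc : Nat.Coprime q 30 :=
        Nat.Coprime.coprime_dvd_left ⟨m.minFac, hq.trans (Nat.mul_comm _ _)⟩ hm
      rw [hq, hgmul, hgχ _ hp hp30, ih q hqlt hqc, Nat.cast_mul, map_mul]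
  -- coprimality helper
  have cop : ∀ m : ℕ, ¬ 2 ∣ m → ¬ 3 ∣ m → ¬ 5 ∣ m → Nat.Coprime m 30 := by
    intro m h2 h3 h5
    rw [show (30:ℕ) = 2 * (3 * 5) from rfl, Nat.coprime_mul_iff_right,
      Nat.coprime_mul_iff_right]
    exact ⟨Nat.coprime_comm.mpr (Nat.prime_two.coprime_iff_not_dvd.mpr h2),
      Nat.coprime_comm.mpr (Nat.prime_three.coprime_iff_not_dvd.mpr h3),
      Nat.coprime_comm.mpr ((by norm_num : Nat.Prime 5).coprime_iff_not_dvd.mpr h5)⟩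
  have h2u : IsUnit (2 : ZMod 27) := ⟨⟨2, 14, by decide, by decide⟩, rfl⟩
  have hsq : χ (2 : ZMod 27) ^ 2 = 1 := by
    rw [← MulChar.pow_apply' χ two_ne_zero, hord, MulChar.one_apply h2u]
  have hpow : ∀ a : ZMod 27, Nat.Coprime (ZMod.val a) 27 → ∃ k : Fin 18, a = 2 ^ (k : ℕ) := by
    decide
  have hcases : χ (2 : ZMod 27) = 1 ∨ χ (2 : ZMod 27) = -1 := by
    have h := hsq; rw [sq] at h; exact mul_self_eq_one_iff.mp h
  rcases hcases with h2 | h2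
  · -- χ 2 = 1 forces χ = 1 since 2 generates the units mod 27
    apply MulChar.ext
    intro a
    obtain ⟨k, hk⟩ := hpow (a : ZMod 27) (ZMod.val_coe_unit_coprime a)
    rw [MulChar.one_apply_coe, hk, map_pow, h2, one_pow]
  · -- χ 2 = -1: derive a contradiction
    exfalso
    have c13 : χ ((13 : ℕ) : ZMod 27) = 1 := by
      rw [show ((13:ℕ) : ZMod 27) = 2 ^ 8 from by decide, map_pow, h2]; norm_num
    have c11 : χ ((11 : ℕ) : ZMod 27) = -1 := by
      rw [show ((11:ℕ) : ZMod 27) = 2 ^ 13 from by decide, map_pow, h2]; norm_num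
    have c7 : χ ((7 : ℕ) : ZMod 27) = 1 := by
      rw [show ((7:ℕ) : ZMod 27) = 2 ^ 16 from by decide, map_pow, h2]; norm_num
    have c20 : χ ((47 : ℕ) : ZMod 27) = -1 := by
      rw [show ((47:ℕ) : ZMod 27) = 2 ^ 7 from by decide, map_pow, h2]; norm_num
    -- first relation, at n ≡ 4 (mod 540)
    have e1 : g (1620 * N + 13) = g (2700 * N + 22) := by
      have := hN (540 * N + 4) (by omega)
      rwa [show 3 * (540 * N + 4) + 1 = 1620 * N + 13 from by ring,
        show 5 * (540 * N + 4) + 2 = 2700 * N + 22 from by ring] at this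
    have g13 : g (1620 * N + 13) = 1 := by
      rw [key (1620 * N + 13) (cop _ (by omega) (by omega) (by omega)),
        ← ZMod.natCast_mod (1620 * N + 13), show (1620 * N + 13) % 27 = 13 % 27 from by omega,
        ZMod.natCast_mod, c13]
    have g22 : g (2700 * N + 22) = g 2 * -1 := by
      rw [show 2700 * N + 22 = 2 * (1350 * N + 11) from by ring, hgmul,
        key (1350 * N + 11) (cop _ (by omega) (by omega) (by omega)),
        ← ZMod.natCast_mod (1350 * N + 11), show (1350 * N + 11) % 27 = 11 % 27 from by omega,
        ZMod.natCast_mod, c11]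
    have hg2 : g 2 = -1 := by
      have := g13 ▸ g22 ▸ e1
      linear_combination this
    -- second relation, at n ≡ 9 (mod 9720)
    have e2 : g (29160 * N + 28) = g (48600 * N + 47) := by
      have := hN (9720 * N + 9) (by omega)
      rwa [show 3 * (9720 * N + 9) + 1 = 29160 * N + 28 from by ring,
        show 5 * (9720 * N + 9) + 2 = 48600 * N + 47 from by ring] at this
    have g28 : g (29160 * N + 28) = g 2 * (g 2 * 1) := by
      rw [show 29160 * N + 28 = 2 * (2 * (7290 * N + 7)) from by ring, hgmul, hgmul,
        key (7290 * N + 7) (cop _ (by omega) (by omega) (by omega)),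
        ← ZMod.natCast_mod (7290 * N + 7), show (7290 * N + 7) % 27 = 7 % 27 from by omega,
        ZMod.natCast_mod, c7]
    have g47 : g (48600 * N + 47) = -1 := by
      rw [key (48600 * N + 47) (cop _ (by omega) (by omega) (by omega)),
        ← ZMod.natCast_mod (48600 * N + 47), show (48600 * N + 47) % 27 = 47 % 27 from by omega,
        ZMod.natCast_mod, c20]
    rw [g28, g47, hg2] at e2
    norm_num at e2
end

section
/- Let g be a homomorphism from the multiplicative group of positive rationals to the unit circle. If g((3n+1)/(5n+2)) = 1 for all positive integers n, and g(p) = 1 for every prime p not dividing 30, then g(2) = g(3) = g(5) = 1, i.e. g is identically 1. -/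
/-! A function multiplicative on the positive rationals is trivial once it is trivial on every
prime. The hypothesis gives this for `p ∤ 30`, and the values `13/22`, `7/12`, `10/17` of
`(3n+1)/(5n+2)` at `n = 4, 2, 3`, combined with `g 7 = g 11 = g 13 = g 17 = 1`, successively
force `g 2 = 1`, `g 3 = 1` and `g 5 = 1`. -/

section PositiveRatMul

variable {M : Type*} [Monoid M] {g : ℚ → M}

theorem map_eq_map_of_map_div_eq_one
    (hmul : ∀ r s : ℚ, 0 < r → 0 < s → g (r * s) = g r * g s)
    {a b : ℚ} (ha : 0 < a) (hb : 0 < b) (h : g (a / b) = 1) : g a = g b := by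
  simpa [h, div_mul_cancel₀ a hb.ne'] using hmul (a / b) b (div_pos ha hb) hb

theorem map_natCast_eq_one_of_forall_prime
    (hmul : ∀ r s : ℚ, 0 < r → 0 < s → g (r * s) = g r * g s)
    (hprime : ∀ p : ℕ, p.Prime → g p = 1) {n : ℕ} (hn : 0 < n) : g n = 1 := by
  induction n using Nat.recOnMul with
  | zero => exact absurd hn (lt_irrefl 0)
  | one =>
    have := hmul 2 1 two_pos one_pos
    simpa [show g 2 = 1 by exact_mod_cast hprime 2 Nat.prime_two] using this.symm
  | prime p hp => exact hprime p hp
  | mul a b iha ihb =>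
    obtain ⟨ha, hb⟩ := CanonicallyOrderedAdd.mul_pos.mp hn
    rw [Nat.cast_mul, hmul _ _ (by exact_mod_cast ha) (by exact_mod_cast hb), iha ha, ihb hb,
      one_mul]

theorem map_eq_one_of_forall_prime
    (hmul : ∀ r s : ℚ, 0 < r → 0 < s → g (r * s) = g r * g s)
    (hprime : ∀ p : ℕ, p.Prime → g p = 1) {r : ℚ} (hr : 0 < r) : g r = 1 := by
  obtain ⟨n, hn⟩ := Int.eq_ofNat_of_zero_le (Rat.num_pos.mpr hr).le
  have hn0 : 0 < n := by have := Rat.num_pos.mpr hr; omega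
  have := hmul r r.den hr (by exact_mod_cast r.den_pos)
  rw [Rat.mul_den_eq_num, hn, Int.cast_natCast, map_natCast_eq_one_of_forall_prime hmul hprime hn0,
    map_natCast_eq_one_of_forall_prime hmul hprime r.den_pos, mul_one] at this
  exact this.symm

end PositiveRatMul

theorem Nat.Prime.eq_two_or_three_or_five_of_dvd_thirty {p : ℕ} (hp : p.Prime) (h : p ∣ 30) :
    p = 2 ∨ p = 3 ∨ p = 5 := by
  rcases hp.dvd_mul.mp (show p ∣ 2 * 3 * 5 from h) with h | h
  · rcases hp.dvd_mul.mp h with h | h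
    · exact .inl ((Nat.prime_dvd_prime_iff_eq hp Nat.prime_two).mp h)
    · exact .inr (.inl ((Nat.prime_dvd_prime_iff_eq hp Nat.prime_three).mp h))
  · exact .inr (.inr ((Nat.prime_dvd_prime_iff_eq hp Nat.prime_five).mp h))

theorem stmt_16_general (g : ℚ → ℂ)
    (hgmul : ∀ r s : ℚ, 0 < r → 0 < s → g (r * s) = g r * g s)
    (hrat : ∀ n : ℕ, 0 < n → g ((3 * n + 1) / (5 * n + 2)) = 1)
    (hp : ∀ p : ℕ, p.Prime → ¬ p ∣ 30 → g p = 1) :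
    g 2 = 1 ∧ g 3 = 1 ∧ g 5 = 1 ∧ ∀ r : ℚ, 0 < r → g r = 1 := by
  have hcross (n : ℕ) (a b : ℚ) (hn : 0 < n := by norm_num) (ha : 0 < a := by norm_num)
      (hb : 0 < b := by norm_num) (hab : ((3 * n + 1) / (5 * n + 2) : ℚ) = a / b := by norm_num) :
      g a = g b :=
    map_eq_map_of_map_div_eq_one hgmul ha hb (hab ▸ hrat n hn)
  have h7 : g 7 = 1 := by exact_mod_cast hp 7 (by norm_num) (by norm_num)
  have h11 : g 11 = 1 := by exact_mod_cast hp 11 (by norm_num) (by norm_num)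
  have h13 : g 13 = 1 := by exact_mod_cast hp 13 (by norm_num) (by norm_num)
  have h17 : g 17 = 1 := by exact_mod_cast hp 17 (by norm_num) (by norm_num)
  have h2 : g 2 = 1 := by
    have h := hcross 4 13 (2 * 11)
    rwa [hgmul 2 11 (by norm_num) (by norm_num), h13, h11, mul_one, eq_comm] at h
  have h3 : g 3 = 1 := by
    have h := hcross 2 7 (2 * (2 * 3))
    rwa [hgmul 2 _ (by norm_num) (by norm_num), hgmul 2 3 (by norm_num) (by norm_num), h7, h2,
      one_mul, one_mul, eq_comm] at h
  have h5 : g 5 = 1 := by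
    have h := hcross 3 (2 * 5) 17
    rwa [hgmul 2 5 (by norm_num) (by norm_num), h17, h2, one_mul] at h
  refine ⟨h2, h3, h5, fun r hr => map_eq_one_of_forall_prime hgmul (fun p hpp => ?_) hr⟩
  by_cases hp30 : p ∣ 30
  · rcases hpp.eq_two_or_three_or_five_of_dvd_thirty hp30 with rfl | rfl | rfl <;> simpa
  · exact hp p hpp hp30

/-- If a homomorphism `g` from the positive rationals to the unit circle satisfies
`g((3n+1)/(5n+2)) = 1` for all `n ≥ 1` and `g(p) = 1` for every prime `p ∤ 30`, then
`g(2) = g(3) = g(5) = 1`, i.e. `g` is identically `1` on the positive rationals. -/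
theorem stmt_16 (g : ℚ → ℂ)
    (hgmul : ∀ r s : ℚ, 0 < r → 0 < s → g (r * s) = g r * g s)
    (hgnorm : ∀ r : ℚ, 0 < r → ‖g r‖ = 1)
    (hrat : ∀ n : ℕ, 0 < n → g ((3 * n + 1) / (5 * n + 2)) = 1)
    (hp : ∀ p : ℕ, p.Prime → ¬ p ∣ 30 → g p = 1) :
    g 2 = 1 ∧ g 3 = 1 ∧ g 5 = 1 ∧ ∀ r : ℚ, 0 < r → g r = 1 :=
  stmt_16_general g hgmul hrat hp
end

section
/- Let g be the completely multiplicative function on the positive rationals coprime to 5 with g(p) = (p/5) (Legendre symbol) for odd primes p ≠ 5 and g(2) = −1; then g is a well-defined nontrivial character into the unit circle with g((5n+1)/(5n−1)) = 1 for all n ≥ 1, g(57) = −1 and g(57²) = 1; in particular 57 is not in the subgroup generated by the fractions (5n+1)/(5n−1), whereas 57² is. -/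
instance : Fact (Nat.Prime 5) := ⟨by norm_num⟩

/-- Invariant: `x = a/b` with `(a*b mod 5)² = 1`, i.e. `a*b ≡ ±1 (mod 5)`. -/
private def P17 (x : ℚˣ) : Prop :=
  ∃ a b : ℤ, b ≠ 0 ∧ (x : ℚ) = (a : ℚ) / b ∧ (((a * b : ℤ) : ZMod 5)) ^ 2 = 1

private lemma P17_one : P17 1 := ⟨1, 1, one_ne_zero, by norm_num, by decide⟩

private lemma P17_mul {x y : ℚˣ} (hx : P17 x) (hy : P17 y) : P17 (x * y) := by
  obtain ⟨a, b, hb, hx1, hx2⟩ := hx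
  obtain ⟨c, d, hd, hy1, hy2⟩ := hy
  refine ⟨a * c, b * d, mul_ne_zero hb hd, ?_, ?_⟩
  · push_cast [Units.val_mul, hx1, hy1]
    field_simp
  · have : (((a * c * (b * d) : ℤ) : ZMod 5)) ^ 2
        = (((a * b : ℤ) : ZMod 5)) ^ 2 * (((c * d : ℤ) : ZMod 5)) ^ 2 := by
      push_cast; ring
    rw [this, hx2, hy2, one_mul]

private lemma P17_inv {x : ℚˣ} (hx : P17 x) : P17 x⁻¹ := by
  obtain ⟨a, b, hb, hx1, hx2⟩ := hx
  have ha : a ≠ 0 := by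
    rintro rfl
    exact x.ne_zero (by rw [hx1]; norm_num)
  refine ⟨b, a, ha, ?_, ?_⟩
  · rw [Units.val_inv_eq_inv_val, hx1, inv_div]
  · rw [mul_comm] at hx2; exact hx2

/-- The completely multiplicative `g` given by the Legendre symbol mod 5 (with `g(2) = -1`)
is trivial on all the ratios `(5n+1)/(5n-1)` but `g(57) = -1`, `g(57²) = 1`; accordingly
`57` is not in the subgroup `Γ` generated by these ratios, whereas `57²` is. -/
theorem stmt_17
    (Γ : Subgroup ℚˣ)
    (hΓ : Γ = Subgroup.closure
      {x : ℚˣ | ∃ n : ℕ, 1 ≤ n ∧ (x : ℚ) = (5 * n + 1) / (5 * n - 1)}) :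
    (∀ n : ℕ, 1 ≤ n → legendreSym 5 (5 * (n : ℤ) + 1) = legendreSym 5 (5 * (n : ℤ) - 1)) ∧
    legendreSym 5 2 = -1 ∧
    legendreSym 5 57 = -1 ∧
    legendreSym 5 (57 ^ 2) = 1 ∧
    Units.mk0 (57 : ℚ) (by norm_num) ∉ Γ ∧
    Units.mk0 ((57 : ℚ) ^ 2) (by norm_num) ∈ Γ := by
  subst hΓ
  refine ⟨?_, by decide, by rw [legendreSym.mod]; decide, by rw [legendreSym.mod]; decide,
    ?_, ?_⟩
  · intro n hn
    rw [legendreSym.mod, legendreSym.mod 5 (5 * (n:ℤ) - 1)]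
    have h1 : (5 * (n:ℤ) + 1) % ((5:ℕ):ℤ) = 1 := by push_cast; omega
    have h2 : (5 * (n:ℤ) - 1) % ((5:ℕ):ℤ) = 4 := by push_cast; omega
    rw [h1, h2]; decide
  · -- 57 ∉ Γ
    intro hmem
    have hP : P17 (Units.mk0 (57 : ℚ) (by norm_num)) := by
      refine Subgroup.closure_induction ?_ P17_one (fun x y _ _ hx hy => P17_mul hx hy)
        (fun x _ hx => P17_inv hx) hmem
      rintro x ⟨n, hn, hx⟩
      refine ⟨5 * (n : ℤ) + 1, 5 * (n : ℤ) - 1, by omega, by push_cast [hx]; ring_nf, ?_⟩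
      have : (((5 * (n : ℤ) + 1) * (5 * (n : ℤ) - 1) : ℤ) : ZMod 5)
          = 25 * ((n : ℤ) : ZMod 5) ^ 2 - 1 := by push_cast; ring
      rw [this]
      have h25 : (25 : ZMod 5) = 0 := by decide
      rw [h25, zero_mul, zero_sub]
      decide
    obtain ⟨a, b, hb, h1, h2⟩ := hP
    have hab : a = 57 * b := by
      have : (57 : ℚ) = (a : ℚ) / b := h1
      field_simp at this
      exact_mod_cast this.symm
    rw [hab] at h2
    have e : ((57 * b * b : ℤ) : ZMod 5) = 2 * (b : ZMod 5) * b := by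
      push_cast
      rw [show (57 : ZMod 5) = 2 by decide]
    have key : ∀ t : ZMod 5, (2 * t * t) ^ 2 ≠ 1 := by decide
    exact key (b : ZMod 5) (by rw [← e]; exact h2)
  · -- 57² ∈ Γ
    have mem : ∀ (q : ℚ) (h : q ≠ 0) (n : ℕ), 1 ≤ n → q = (5 * (n : ℚ) + 1) / (5 * (n : ℚ) - 1) →
        Units.mk0 q h ∈ Subgroup.closure
          {x : ℚˣ | ∃ n : ℕ, 1 ≤ n ∧ (x : ℚ) = (5 * n + 1) / (5 * n - 1)} :=
      fun q h n hn he => Subgroup.subset_closure ⟨n, hn, he⟩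
    have hu1 := mem ((6 : ℚ)/4) (by norm_num) 1 le_rfl (by norm_num)
    have hu3 := mem ((16 : ℚ)/14) (by norm_num) 3 (by norm_num) (by norm_num)
    have hu4 := mem ((21 : ℚ)/19) (by norm_num) 4 (by norm_num) (by norm_num)
    have hu7 := mem ((36 : ℚ)/34) (by norm_num) 7 (by norm_num) (by norm_num)
    have hu10 := mem ((51 : ℚ)/49) (by norm_num) 10 (by norm_num) (by norm_num)
    have key : Units.mk0 ((57 : ℚ) ^ 2) (by norm_num)
        = (Units.mk0 ((6 : ℚ)/4) (by norm_num)) ^ 19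
          * (Units.mk0 ((16 : ℚ)/14) (by norm_num)) ^ 8
          * ((Units.mk0 ((21 : ℚ)/19) (by norm_num)) ^ 2
            * (Units.mk0 ((36 : ℚ)/34) (by norm_num)) ^ 5
            * (Units.mk0 ((51 : ℚ)/49) (by norm_num)) ^ 5)⁻¹ := by
      apply Units.ext
      simp only [Units.val_mul, Units.val_pow_eq_pow_val, Units.val_inv_eq_inv_val,
        Units.val_mk0]
      norm_num
    rw [key]
    exact mul_mem (mul_mem (pow_mem hu1 19) (pow_mem hu3 8))
      (inv_mem (mul_mem (mul_mem (pow_mem hu4 2) (pow_mem hu7 5)) (pow_mem hu10 5)))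
end
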